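/- arXiv:1009.3638 — 3 statements merged into one kernel-verified Lean document; each statement's English description precedes it below -/
import Mathlib

section
/- Let B be an n-dimensional Brownian motion with Cov(B^i_t, B^j_t) = t·σ_{ij}, and let 0 ≤ x_1 ≤ ... ≤ x_n ≤ 1 be closing-time fractions. Define closing-time returns X^i_t = B^i_{t+x_i} − B^i_{t−1+x_i} for t ∈ ℤ. Then Cov(X^i_t, X^j_t) = σ_{ij}·(1 − |x_i − x_j|). -/
/-!
Split each return at the other asset's closing times: with `x i ≤ x j` the two returns cover
`[t - 1 + x i, t + x i]` and `[t - 1 + x j, t + x j]`, which share the interval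
`[t - 1 + x j, t + x i]` of length `1 - (x j - x i)`. By bilinearity of the covariance, only the
shared increment contributes, and it contributes `(1 - (x j - x i)) σᵢⱼ`; the other case follows
from the symmetry of `σ`.
-/

open MeasureTheory

noncomputable def cov {Ω : Type} [MeasurableSpace Ω] (μ : Measure Ω) (X Y : Ω → ℝ) : ℝ :=
  ∫ ω, (X ω - ∫ ω', X ω' ∂μ) * (Y ω - ∫ ω', Y ω' ∂μ) ∂μ

open ProbabilityTheory

theorem cov_eq_covariance {Ω : Type} [MeasurableSpace Ω] (μ : Measure Ω) (X Y : Ω → ℝ) :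
    cov μ X Y = cov[X, Y; μ] :=
  rfl

section Increments

variable {Ω : Type} [MeasurableSpace Ω] {μ : Measure Ω} {ι : Type*}
  {B : ℝ → Ω → ι → ℝ} {S : Matrix ι ι ℝ}

theorem isSymm_of_cov_increments
    (hsame : ∀ s t : ℝ, s ≤ t → ∀ i j : ι,
      cov μ (fun ω => B t ω i - B s ω i) (fun ω => B t ω j - B s ω j) = (t - s) * S i j) :
    S.IsSymm := by
  refine Matrix.IsSymm.ext fun i j => ?_
  have hji := hsame 0 1 zero_le_one j i
  rw [cov_eq_covariance, covariance_comm, ← cov_eq_covariance, hsame 0 1 zero_le_one i j] at hji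
  simpa using hji.symm

theorem cov_increments_of_overlap [IsFiniteMeasure μ]
    (hL2 : ∀ (t : ℝ) (i : ι), MemLp (fun ω => B t ω i) 2 μ)
    (hsame : ∀ s t : ℝ, s ≤ t → ∀ i j : ι,
      cov μ (fun ω => B t ω i - B s ω i) (fun ω => B t ω j - B s ω j) = (t - s) * S i j)
    (hdisj : ∀ a b c d : ℝ, a ≤ b → b ≤ c → c ≤ d → ∀ i j : ι,
      cov μ (fun ω => B b ω i - B a ω i) (fun ω => B d ω j - B c ω j) = 0)
    {a b c d : ℝ} (hab : a ≤ b) (hbc : b ≤ c) (hcd : c ≤ d) (i j : ι) :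
    cov μ (fun ω => B c ω i - B a ω i) (fun ω => B d ω j - B b ω j) = (c - b) * S i j := by
  have hinc : ∀ (s t : ℝ) (k : ι), MemLp (fun ω => B t ω k - B s ω k) 2 μ :=
    fun s t k => (hL2 t k).sub (hL2 s k)
  have hsplit : ∀ (r s t : ℝ) (k : ι), (fun ω => B t ω k - B r ω k) =
      (fun ω => B s ω k - B r ω k) + (fun ω => B t ω k - B s ω k) := by
    intro r s t k
    funext ω
    simp only [Pi.add_apply]
    ring
  rw [hsplit a b c i, hsplit b c d j, cov_eq_covariance,
    covariance_add_left (hinc _ _ i) (hinc _ _ i) ((hinc _ _ j).add (hinc _ _ j)),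
    covariance_add_right (hinc _ _ i) (hinc _ _ j) (hinc _ _ j),
    covariance_add_right (hinc _ _ i) (hinc _ _ j) (hinc _ _ j)]
  simp only [← cov_eq_covariance]
  rw [hdisj a b b c hab le_rfl hbc, hdisj a b c d hab hbc hcd, hsame b c hbc,
    hdisj b c c d hbc le_rfl hcd]
  ring

end Increments

theorem closing_time_lag_zero_covariance_general
    {Ω : Type} [MeasurableSpace Ω] (μ : Measure Ω) [IsProbabilityMeasure μ] {n : ℕ}
    (B : ℝ → Ω → Fin n → ℝ) (S : Matrix (Fin n) (Fin n) ℝ) (x : Fin n → ℝ)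
    (hx0 : ∀ i, 0 ≤ x i) (hx1 : ∀ i, x i ≤ 1)
    (hL2 : ∀ (t : ℝ) (i : Fin n), MemLp (fun ω => B t ω i) 2 μ)
    (hsame : ∀ s t : ℝ, s ≤ t → ∀ i j : Fin n,
      cov μ (fun ω => B t ω i - B s ω i) (fun ω => B t ω j - B s ω j) = (t - s) * S i j)
    (hdisj : ∀ a b c d : ℝ, a ≤ b → b ≤ c → c ≤ d → ∀ i j : Fin n,
      cov μ (fun ω => B b ω i - B a ω i) (fun ω => B d ω j - B c ω j) = 0 ∧
      cov μ (fun ω => B d ω i - B c ω i) (fun ω => B b ω j - B a ω j) = 0) :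
    ∀ (t : ℤ) (i j : Fin n),
      cov μ (fun ω => B ((t : ℝ) + x i) ω i - B ((t : ℝ) - 1 + x i) ω i)
            (fun ω => B ((t : ℝ) + x j) ω j - B ((t : ℝ) - 1 + x j) ω j)
        = S i j * (1 - |x i - x j|) := by
  intro t
  have hoverlap : ∀ i j : Fin n, x i ≤ x j →
      cov μ (fun ω => B ((t : ℝ) + x i) ω i - B ((t : ℝ) - 1 + x i) ω i)
            (fun ω => B ((t : ℝ) + x j) ω j - B ((t : ℝ) - 1 + x j) ω j)
        = S i j * (1 - |x i - x j|) := by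
    intro i j hij
    rw [cov_increments_of_overlap hL2 hsame (fun a b c d hab hbc hcd i j =>
        (hdisj a b c d hab hbc hcd i j).1) (b := (t : ℝ) - 1 + x j) (by linarith)
        (by linarith [hx0 i, hx1 j]) (by linarith),
      abs_sub_comm, abs_of_nonneg (sub_nonneg.mpr hij)]
    ring
  intro i j
  rcases le_total (x i) (x j) with hij | hji
  · exact hoverlap i j hij
  · rw [cov_eq_covariance, covariance_comm, ← cov_eq_covariance, hoverlap j i hji,
      (isSymm_of_cov_increments hsame).apply, abs_sub_comm]

/-- Lag-zero covariance of closing-time returns in the Brownian model: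
`Cov(Xⁱₜ, Xʲₜ) = σᵢⱼ (1 - |xᵢ - xⱼ|)`. -/
theorem closing_time_lag_zero_covariance
    {Ω : Type} [MeasurableSpace Ω] (μ : Measure Ω) [IsProbabilityMeasure μ] {n : ℕ}
    (B : ℝ → Ω → Fin n → ℝ) (S : Matrix (Fin n) (Fin n) ℝ) (x : Fin n → ℝ)
    (hx0 : ∀ i, 0 ≤ x i) (hx1 : ∀ i, x i ≤ 1)
    (hmono : ∀ i j : Fin n, i ≤ j → x i ≤ x j)
    (hL2 : ∀ (t : ℝ) (i : Fin n), MemLp (fun ω => B t ω i) 2 μ)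
    (hsame : ∀ s t : ℝ, s ≤ t → ∀ i j : Fin n,
      cov μ (fun ω => B t ω i - B s ω i) (fun ω => B t ω j - B s ω j) = (t - s) * S i j)
    (hdisj : ∀ a b c d : ℝ, a ≤ b → b ≤ c → c ≤ d → ∀ i j : Fin n,
      cov μ (fun ω => B b ω i - B a ω i) (fun ω => B d ω j - B c ω j) = 0 ∧
      cov μ (fun ω => B d ω i - B c ω i) (fun ω => B b ω j - B a ω j) = 0) :
    ∀ (t : ℤ) (i j : Fin n),
      cov μ (fun ω => B ((t : ℝ) + x i) ω i - B ((t : ℝ) - 1 + x i) ω i)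
            (fun ω => B ((t : ℝ) + x j) ω j - B ((t : ℝ) - 1 + x j) ω j)
        = S i j * (1 - |x i - x j|) :=
  closing_time_lag_zero_covariance_general μ B S x hx0 hx1 hL2 hsame hdisj
end

section
/- In the closing-time Brownian model with closing fractions x_1 ≤ ... ≤ x_n in [0,1], the lag-one covariance of closing-time returns satisfies Cov(X^i_{t+1}, X^j_t) = (x_j − x_i)·σ_{ij} if x_j > x_i, and 0 if x_j ≤ x_i; moreover Cov(X^i_{t+k}, X^j_t) = 0 for all k ≥ 2. -/
/-
Split the later return at `t + x j` and the earlier one at `t + x i`: all resulting pairs of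
pieces live on disjoint windows except the common window `[t + x i, t + x j]`, which contributes
`(x j - x i) σᵢⱼ`. When `x j ≤ x i`, or at lags `k ≥ 2`, the two windows do not overlap at all,
because `0 ≤ x ≤ 1` keeps their lengths at one day.
-/

open MeasureTheory ProbabilityTheory

section Bilinearity

variable {Ω : Type} [MeasurableSpace Ω] {μ : Measure Ω} [IsFiniteMeasure μ] {X Y Z : Ω → ℝ}

lemma cov_add_left (hX : MemLp X 2 μ) (hY : MemLp Y 2 μ) (hZ : MemLp Z 2 μ) :
    cov μ (X + Y) Z = cov μ X Z + cov μ Y Z :=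
  covariance_add_left hX hY hZ

lemma cov_add_right (hX : MemLp X 2 μ) (hY : MemLp Y 2 μ) (hZ : MemLp Z 2 μ) :
    cov μ X (Y + Z) = cov μ X Y + cov μ X Z :=
  covariance_add_right hX hY hZ

end Bilinearity

section Increments

variable {Ω : Type} {ι : Type*} {B : ℝ → Ω → ι → ℝ}

lemma increment_eq_add (i : ι) (s r t : ℝ) :
    (fun ω => B t ω i - B s ω i) = (fun ω => B t ω i - B r ω i) + (fun ω => B r ω i - B s ω i) := by
  funext ω
  simp

variable [MeasurableSpace Ω] {μ : Measure Ω}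

theorem cov_increments_eq_of_overlap [IsFiniteMeasure μ] {S : Matrix ι ι ℝ}
    (hL2 : ∀ (t : ℝ) (i : ι), MemLp (fun ω => B t ω i) 2 μ)
    (hsame : ∀ s t : ℝ, s ≤ t → ∀ i j : ι,
      cov μ (fun ω => B t ω i - B s ω i) (fun ω => B t ω j - B s ω j) = (t - s) * S i j)
    (hlater : ∀ a b c d : ℝ, a ≤ b → b ≤ c → c ≤ d → ∀ i j : ι,
      cov μ (fun ω => B d ω i - B c ω i) (fun ω => B b ω j - B a ω j) = 0)
    {a b c d : ℝ} (hca : c ≤ a) (had : a ≤ d) (hdb : d ≤ b) (i j : ι) :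
    cov μ (fun ω => B b ω i - B a ω i) (fun ω => B d ω j - B c ω j) = (d - a) * S i j := by
  have hincr : ∀ i s t, MemLp (fun ω => B t ω i - B s ω i) 2 μ :=
    fun i s t => (hL2 t i).sub (hL2 s i)
  calc cov μ (fun ω => B b ω i - B a ω i) (fun ω => B d ω j - B c ω j)
      = cov μ (fun ω => B b ω i - B d ω i) (fun ω => B d ω j - B c ω j)
        + cov μ (fun ω => B d ω i - B a ω i) (fun ω => B d ω j - B c ω j) := by
        rw [increment_eq_add i a d b]
        exact cov_add_left (hincr _ _ _) (hincr _ _ _) (hincr _ _ _)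
    _ = (d - a) * S i j := by
        rw [hlater c d d b (hca.trans had) le_rfl hdb, zero_add, increment_eq_add j c a d,
          cov_add_right (hincr _ _ _) (hincr _ _ _) (hincr _ _ _), hsame a d had,
          hlater c a a d hca le_rfl had, add_zero]

end Increments

theorem closing_time_lag_one_covariance_general
    {Ω : Type} [MeasurableSpace Ω] (μ : Measure Ω) [IsProbabilityMeasure μ] {n : ℕ}
    (B : ℝ → Ω → Fin n → ℝ) (S : Matrix (Fin n) (Fin n) ℝ) (x : Fin n → ℝ)
    (hx0 : ∀ i, 0 ≤ x i) (hx1 : ∀ i, x i ≤ 1)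
    (hL2 : ∀ (t : ℝ) (i : Fin n), MemLp (fun ω => B t ω i) 2 μ)
    (hsame : ∀ s t : ℝ, s ≤ t → ∀ i j : Fin n,
      cov μ (fun ω => B t ω i - B s ω i) (fun ω => B t ω j - B s ω j) = (t - s) * S i j)
    (hdisj : ∀ a b c d : ℝ, a ≤ b → b ≤ c → c ≤ d → ∀ i j : Fin n,
      cov μ (fun ω => B b ω i - B a ω i) (fun ω => B d ω j - B c ω j) = 0 ∧
      cov μ (fun ω => B d ω i - B c ω i) (fun ω => B b ω j - B a ω j) = 0) :
    ∀ (t : ℤ) (i j : Fin n),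
      (cov μ (fun ω => B ((t : ℝ) + 1 + x i) ω i - B ((t : ℝ) + x i) ω i)
             (fun ω => B ((t : ℝ) + x j) ω j - B ((t : ℝ) - 1 + x j) ω j)
         = if x i < x j then (x j - x i) * S i j else 0) ∧
      (∀ k : ℤ, 2 ≤ k →
        cov μ (fun ω => B ((t : ℝ) + (k : ℝ) + x i) ω i - B ((t : ℝ) + (k : ℝ) - 1 + x i) ω i)
              (fun ω => B ((t : ℝ) + x j) ω j - B ((t : ℝ) - 1 + x j) ω j)
          = 0) := by
  have hlater := fun a b c d hab hbc hcd i j => (hdisj a b c d hab hbc hcd i j).2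
  intro t i j
  have hxi := hx0 i
  have hxj := hx1 j
  refine ⟨?_, fun k hk => hlater _ _ _ _ (by linarith) ?_ (by linarith) i j⟩
  · split_ifs with hij
    · rw [cov_increments_eq_of_overlap hL2 hsame hlater (by linarith) (by linarith) (by linarith)]
      ring
    · exact hlater _ _ _ _ (by linarith) (by linarith) (by linarith) i j
  · have : (2 : ℝ) ≤ k := by exact_mod_cast hk
    linarith

/-- Lag-one covariance of closing-time returns in the Brownian model:
`Cov(Xⁱ_{t+1}, Xʲₜ) = (xⱼ - xᵢ)σᵢⱼ` if `xⱼ > xᵢ`, else `0`; and all lags `k ≥ 2` vanish. -/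
theorem closing_time_lag_one_covariance
    {Ω : Type} [MeasurableSpace Ω] (μ : Measure Ω) [IsProbabilityMeasure μ] {n : ℕ}
    (B : ℝ → Ω → Fin n → ℝ) (S : Matrix (Fin n) (Fin n) ℝ) (x : Fin n → ℝ)
    (hx0 : ∀ i, 0 ≤ x i) (hx1 : ∀ i, x i ≤ 1)
    (hmono : ∀ i j : Fin n, i ≤ j → x i ≤ x j)
    (hL2 : ∀ (t : ℝ) (i : Fin n), MemLp (fun ω => B t ω i) 2 μ)
    (hsame : ∀ s t : ℝ, s ≤ t → ∀ i j : Fin n,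
      cov μ (fun ω => B t ω i - B s ω i) (fun ω => B t ω j - B s ω j) = (t - s) * S i j)
    (hdisj : ∀ a b c d : ℝ, a ≤ b → b ≤ c → c ≤ d → ∀ i j : Fin n,
      cov μ (fun ω => B b ω i - B a ω i) (fun ω => B d ω j - B c ω j) = 0 ∧
      cov μ (fun ω => B d ω i - B c ω i) (fun ω => B b ω j - B a ω j) = 0) :
    ∀ (t : ℤ) (i j : Fin n),
      (cov μ (fun ω => B ((t : ℝ) + 1 + x i) ω i - B ((t : ℝ) + x i) ω i)
             (fun ω => B ((t : ℝ) + x j) ω j - B ((t : ℝ) - 1 + x j) ω j)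
         = if x i < x j then (x j - x i) * S i j else 0) ∧
      (∀ k : ℤ, 2 ≤ k →
        cov μ (fun ω => B ((t : ℝ) + (k : ℝ) + x i) ω i - B ((t : ℝ) + (k : ℝ) - 1 + x i) ω i)
              (fun ω => B ((t : ℝ) + x j) ω j - B ((t : ℝ) - 1 + x j) ω j)
          = 0) :=
  closing_time_lag_one_covariance_general μ B S x hx0 hx1 hL2 hsame hdisj
end

section
/- In the VMA(1) setting with λᵀΓ(1)λ ≠ 0, the ratio of the closing-time d-day volatility sqrt(d·λᵀΓ(0)λ + 2(d−1)λᵀΓ(1)λ) to the Newey-West d-day volatility sqrt(d·λᵀΓ(0)λ + d·λᵀΓ(1)λ) converges as d → ∞ to sqrt((λᵀΓ(0)λ + 2λᵀΓ(1)λ)/(λᵀΓ(0)λ + λᵀΓ(1)λ)), which is not equal to 1. -/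
open Matrix Filter

lemma aux (a b : ℝ) (hb : b ≠ 0) (h1 : 0 < a + b) (h2 : 0 < a + 2 * b) :
    Tendsto (fun d : ℕ =>
        Real.sqrt ((d : ℝ) * a + 2 * ((d : ℝ) - 1) * b) /
        Real.sqrt ((d : ℝ) * a + (d : ℝ) * b))
      atTop (nhds (Real.sqrt ((a + 2 * b) / (a + b)))) ∧
    Real.sqrt ((a + 2 * b) / (a + b)) ≠ 1 := by
  constructor
  · have h0 : Tendsto (fun d : ℕ => (2 * b) / (d : ℝ)) atTop (nhds 0) :=
      tendsto_const_div_atTop_nhds_zero_nat (2 * b)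
    have hquot : Tendsto (fun d : ℕ => ((a + 2 * b) - (2 * b) / (d : ℝ)) / (a + b))
        atTop (nhds ((a + 2 * b) / (a + b))) := by
      have := ((tendsto_const_nhds (x := a + 2 * b) (f := atTop (α := ℕ))).sub h0).div_const (a + b)
      simpa using this
    have hsq := (Real.continuous_sqrt.continuousAt.tendsto).comp hquot
    refine hsq.congr' ?_
    have hcast : Tendsto (fun d : ℕ => (d : ℝ)) atTop atTop := tendsto_natCast_atTop_atTop
    filter_upwards [eventually_ge_atTop 1, hcast.eventually_ge_atTop (2 * b / (a + 2 * b))]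
      with d hd hd2
    have hd' : (1 : ℝ) ≤ (d : ℝ) := by exact_mod_cast hd
    have hdpos : (0 : ℝ) < d := lt_of_lt_of_le one_pos hd'
    have hmul : 2 * b / (a + 2 * b) * (a + 2 * b) ≤ (d : ℝ) * (a + 2 * b) :=
      mul_le_mul_of_nonneg_right hd2 h2.le
    rw [div_mul_cancel₀ _ (ne_of_gt h2)] at hmul
    have hnum : 0 ≤ (d : ℝ) * a + 2 * ((d : ℝ) - 1) * b := by nlinarith
    have hden : 0 < (d : ℝ) * a + (d : ℝ) * b := by nlinarith
    have key : ((a + 2 * b) - (2 * b) / (d : ℝ)) / (a + b)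
        = ((d : ℝ) * a + 2 * ((d : ℝ) - 1) * b) / ((d : ℝ) * a + (d : ℝ) * b) := by
      rw [div_eq_div_iff h1.ne' hden.ne']
      field_simp
      ring
    simp only [Function.comp_apply]
    rw [key, Real.sqrt_div hnum]
  · intro h
    have hq : (a + 2 * b) / (a + b) = 1 := by
      have h0 : 0 ≤ (a + 2 * b) / (a + b) := by positivity
      nlinarith [Real.sq_sqrt h0, h]
    rw [div_eq_one_iff_eq h1.ne'] at hq
    exact hb (by linarith)


/-- The ratio of the closing-time `d`-day volatility to the Newey–West `d`-day
volatility converges to `√((λᵀΓ₀λ + 2λᵀΓ₁λ)/(λᵀΓ₀λ + λᵀΓ₁λ))`, which is not 1 when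
`λᵀΓ₁λ ≠ 0`. -/
theorem closing_time_vs_newey_west_ratio {n : ℕ}
    (Γ0 Γ1 : Matrix (Fin n) (Fin n) ℝ) (lam : Fin n → ℝ)
    (hb : lam ⬝ᵥ Γ1.mulVec lam ≠ 0)
    (h1 : 0 < lam ⬝ᵥ Γ0.mulVec lam + lam ⬝ᵥ Γ1.mulVec lam)
    (h2 : 0 < lam ⬝ᵥ Γ0.mulVec lam + 2 * (lam ⬝ᵥ Γ1.mulVec lam)) :
    Tendsto (fun d : ℕ =>
        Real.sqrt ((d : ℝ) * (lam ⬝ᵥ Γ0.mulVec lam)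
            + 2 * ((d : ℝ) - 1) * (lam ⬝ᵥ Γ1.mulVec lam)) /
        Real.sqrt ((d : ℝ) * (lam ⬝ᵥ Γ0.mulVec lam) + (d : ℝ) * (lam ⬝ᵥ Γ1.mulVec lam)))
      atTop (nhds (Real.sqrt ((lam ⬝ᵥ Γ0.mulVec lam + 2 * (lam ⬝ᵥ Γ1.mulVec lam))
          / (lam ⬝ᵥ Γ0.mulVec lam + lam ⬝ᵥ Γ1.mulVec lam)))) ∧
    Real.sqrt ((lam ⬝ᵥ Γ0.mulVec lam + 2 * (lam ⬝ᵥ Γ1.mulVec lam))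
        / (lam ⬝ᵥ Γ0.mulVec lam + lam ⬝ᵥ Γ1.mulVec lam)) ≠ 1 := by
  exact aux _ _ hb h1 h2
end
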